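/- arXiv:1708.03437 — 3 statements merged into one kernel-verified Lean document; each statement's English description precedes it below -/
import Mathlib

section
/- If (s₁, s₂, d) is the minimal weight vector of a quasi-homogeneous but non-homogeneous polynomial differential system (P, Q) with P ≢ 0, then gcd(s₁, s₂) = 1. -/
/-!
The weight-vector condition says exactly that `P` and `Q` are weighted homogeneous for the weights
`(s₁, s₂)`, of degrees `s₁ + d - 1` and `s₂ + d - 1`: scale by `α = 2` and compare coefficients.
With `r = gcd(s₁, s₂)`, every monomial of `P ≠ 0` has weighted degree divisible by `r`, so
`r ∣ d - 1`, and dividing the weights and the degrees by `r` gives the weight vector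
`(s₁ / r, s₂ / r, (d - 1) / r + 1)`; minimality forces `r = 1`.
-/

open MvPolynomial

/-- `(s₁, s₂, d)` is a weight vector of the system `ẋ = P(x,y)`, `ẏ = Q(x,y)`. -/
def IsWeightVector (P Q : MvPolynomial (Fin 2) ℝ) (s₁ s₂ d : ℕ) : Prop :=
  0 < s₁ ∧ 0 < s₂ ∧ 0 < d ∧
  ∀ α : ℝ, 0 < α → ∀ x y : ℝ,
    eval ![α ^ s₁ * x, α ^ s₂ * y] P = α ^ (s₁ + d - 1) * eval ![x, y] P ∧
    eval ![α ^ s₁ * x, α ^ s₂ * y] Q = α ^ (s₂ + d - 1) * eval ![x, y] Q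

theorem Finsupp.weight_smul_apply {σ M : Type*} [AddCommMonoid M] (r : ℕ) (w : σ → M)
    (d : σ →₀ ℕ) : weight (r • w) d = r • weight w d := by
  simp only [weight_apply, Finsupp.sum, Finset.smul_sum, Pi.smul_apply, smul_comm r]

namespace MvPolynomial

variable {σ R : Type*}

theorem prod_weight_smul_pow [CommMonoid R] (w : σ → ℕ) (α : R) (v : σ → R) (d : σ →₀ ℕ) :
    ∏ i ∈ d.support, (α ^ w i * v i) ^ d i
      = α ^ Finsupp.weight w d * ∏ i ∈ d.support, v i ^ d i := by
  simp only [mul_pow, ← pow_mul, Finset.prod_mul_distrib, Finset.prod_pow_eq_pow_sum,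
    Finsupp.weight_apply, Finsupp.sum, smul_eq_mul, mul_comm (w _)]

theorem eval_weight_smul_eq_sum [CommSemiring R] (w : σ → ℕ) (α : R) (v : σ → R)
    (φ : MvPolynomial σ R) :
    eval (fun i ↦ α ^ w i * v i) φ
      = ∑ d ∈ φ.support, α ^ Finsupp.weight w d * (coeff d φ * ∏ i ∈ d.support, v i ^ d i) := by
  simp only [eval_eq, prod_weight_smul_pow, mul_left_comm]

theorem IsWeightedHomogeneous.eval_weight_smul [CommSemiring R] {w : σ → ℕ}
    {φ : MvPolynomial σ R} {n : ℕ} (hφ : IsWeightedHomogeneous w φ n) (α : R) (v : σ → R) :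
    eval (fun i ↦ α ^ w i * v i) φ = α ^ n * eval v φ := by
  rw [eval_weight_smul_eq_sum, eval_eq, Finset.mul_sum]
  refine Finset.sum_congr rfl fun d hd ↦ ?_
  rw [hφ (mem_support_iff.mp hd)]

theorem isWeightedHomogeneous_of_eval_weight_smul [Field R] [LinearOrder R]
    [IsStrictOrderedRing R] {w : σ → ℕ} {φ : MvPolynomial σ R} {n : ℕ} {α : R}
    (hα₀ : 0 < α) (hα₁ : α ≠ 1)
    (h : ∀ v : σ → R, eval (fun i ↦ α ^ w i * v i) φ = α ^ n * eval v φ) :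
    IsWeightedHomogeneous w φ n := by
  classical
  -- `ψ` evaluates to the difference of the two sides of `h`.
  set ψ : MvPolynomial σ R :=
    ∑ d ∈ φ.support, monomial d ((α ^ Finsupp.weight w d - α ^ n) * coeff d φ) with hψ
  have hψ_zero : ψ = 0 := funext fun v ↦ by
    simp only [hψ, map_sum, eval_monomial, map_zero, sub_mul, mul_assoc, Finset.sum_sub_distrib,
      Finsupp.prod]
    rw [← Finset.mul_sum, ← eval_weight_smul_eq_sum, h, eval_eq, sub_self]
  intro d hd
  have hpow : α ^ Finsupp.weight w d = α ^ n := by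
    simpa [hψ, coeff_sum, coeff_monomial, hd, sub_eq_zero] using congrArg (coeff d) hψ_zero
  exact (pow_right_inj₀ hα₀ hα₁).mp hpow

theorem isWeightedHomogeneous_smul_iff [CommSemiring R] {w : σ → ℕ} {φ : MvPolynomial σ R}
    {r n : ℕ} (hr : r ≠ 0) :
    IsWeightedHomogeneous (r • w) φ (r * n) ↔ IsWeightedHomogeneous w φ n := by
  simp only [IsWeightedHomogeneous, Finsupp.weight_smul_apply, smul_eq_mul, Nat.mul_right_inj hr]

theorem IsWeightedHomogeneous.dvd_of_smul [CommSemiring R] {w : σ → ℕ} {φ : MvPolynomial σ R}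
    {r m : ℕ} (hφ : IsWeightedHomogeneous (r • w) φ m) (hφ₀ : φ ≠ 0) : r ∣ m := by
  obtain ⟨d, hd⟩ := exists_coeff_ne_zero hφ₀
  rw [← hφ hd, Finsupp.weight_smul_apply]
  exact dvd_mul_right r _

theorem isWeightedHomogeneous_fin_two_iff [Field R] [LinearOrder R] [IsStrictOrderedRing R]
    {φ : MvPolynomial (Fin 2) R} {s₁ s₂ m : ℕ} :
    IsWeightedHomogeneous ![s₁, s₂] φ m ↔
      ∀ α : R, 0 < α → ∀ x y : R, eval ![α ^ s₁ * x, α ^ s₂ * y] φ = α ^ m * eval ![x, y] φ := by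
  have hvec (α x y : R) : ![α ^ s₁ * x, α ^ s₂ * y] = fun i ↦ α ^ ![s₁, s₂] i * ![x, y] i := by
    ext i; fin_cases i <;> rfl
  refine ⟨fun h α _ x y ↦ by rw [hvec, h.eval_weight_smul], fun h ↦ ?_⟩
  refine isWeightedHomogeneous_of_eval_weight_smul two_pos (by norm_num) fun v ↦ ?_
  have hv : ![v 0, v 1] = v := by ext i; fin_cases i <;> rfl
  simpa only [hvec, hv] using h 2 two_pos (v 0) (v 1)

end MvPolynomial

namespace IsWeightVector

variable {P Q : MvPolynomial (Fin 2) ℝ}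

theorem iff_isWeightedHomogeneous {s₁ s₂ d : ℕ} :
    IsWeightVector P Q s₁ s₂ d ↔ 0 < s₁ ∧ 0 < s₂ ∧ 0 < d ∧
      IsWeightedHomogeneous ![s₁, s₂] P (s₁ + d - 1) ∧
      IsWeightedHomogeneous ![s₁, s₂] Q (s₂ + d - 1) := by
  simp only [IsWeightVector, isWeightedHomogeneous_fin_two_iff, ← forall_and]

theorem dvd_sub_one {r a b d : ℕ} (h : IsWeightVector P Q (r * a) (r * b) d) (hP : P ≠ 0) :
    r ∣ d - 1 := by
  obtain ⟨-, -, hd, hPw, -⟩ := iff_isWeightedHomogeneous.mp h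
  rw [show ![r * a, r * b] = r • ![a, b] by simp] at hPw
  have := hPw.dvd_of_smul hP
  rwa [Nat.add_sub_assoc hd, Nat.dvd_add_right (dvd_mul_right r a)] at this

theorem of_mul {r a b c : ℕ} (h : IsWeightVector P Q (r * a) (r * b) (r * c + 1)) :
    IsWeightVector P Q a b (c + 1) := by
  obtain ⟨ha, hb, -, hP, hQ⟩ := iff_isWeightedHomogeneous.mp h
  have hr : r ≠ 0 := (Nat.pos_of_mul_pos_right ha).ne'
  rw [show ![r * a, r * b] = r • ![a, b] by simp] at hP hQ
  refine iff_isWeightedHomogeneous.mpr ⟨Nat.pos_of_mul_pos_left ha, Nat.pos_of_mul_pos_left hb,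
    c.succ_pos, ?_, ?_⟩
  · rw [← isWeightedHomogeneous_smul_iff hr]; convert hP using 1; simp [mul_add]
  · rw [← isWeightedHomogeneous_smul_iff hr]; convert hQ using 1; simp [mul_add]

end IsWeightVector

theorem minimal_weight_vector_gcd_one_general
    (P Q : MvPolynomial (Fin 2) ℝ) (s₁ s₂ d : ℕ)
    (hP0 : P ≠ 0)
    (hw : IsWeightVector P Q s₁ s₂ d)
    (hmin : ∀ s₁' s₂' d' : ℕ, IsWeightVector P Q s₁' s₂' d' →
      s₁ ≤ s₁' ∧ s₂ ≤ s₂' ∧ d ≤ d') :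
    Nat.gcd s₁ s₂ = 1 := by
  obtain ⟨r, hr⟩ : ∃ r, Nat.gcd s₁ s₂ = r := ⟨_, rfl⟩
  obtain ⟨a, rfl⟩ : r ∣ s₁ := hr ▸ Nat.gcd_dvd_left _ _
  obtain ⟨b, rfl⟩ : r ∣ s₂ := hr ▸ Nat.gcd_dvd_right _ _
  obtain ⟨c, hc⟩ := hw.dvd_sub_one hP0
  obtain rfl : d = r * c + 1 := by have hd : 0 < d := hw.2.2.1; omega
  have hsmall : IsWeightVector P Q a b (c + 1) := hw.of_mul
  have hra : r * a ≤ 1 * a := by simpa using (hmin a b (c + 1) hsmall).1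
  rw [hr]
  exact le_antisymm (Nat.le_of_mul_le_mul_right hra hsmall.1) (Nat.pos_of_mul_pos_right hw.1)

/-- if `(s₁, s₂, d)` is the minimal weight vector of a quasi-homogeneous but
non-homogeneous polynomial system `(P, Q)` with `P ≢ 0`, then `gcd(s₁, s₂) = 1`. -/
theorem minimal_weight_vector_gcd_one
    (P Q : MvPolynomial (Fin 2) ℝ) (s₁ s₂ d : ℕ)
    (hP0 : P ≠ 0)
    (hw : IsWeightVector P Q s₁ s₂ d)
    (hmin : ∀ s₁' s₂' d' : ℕ, IsWeightVector P Q s₁' s₂' d' →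
      s₁ ≤ s₁' ∧ s₂ ≤ s₂' ∧ d ≤ d')
    (hnonhom : ¬ ∃ d' : ℕ, IsWeightVector P Q 1 1 d') :
    Nat.gcd s₁ s₂ = 1 :=
  minimal_weight_vector_gcd_one_general P Q s₁ s₂ d hP0 hw hmin
end

section
/- If (s₁, s₂, d) is a weight vector of a quasi-homogeneous polynomial system (P, Q) with P ≢ 0 and Q ≢ 0, and r is a common divisor of s₁, s₂, and d-1, then (s₁/r, s₂/r, (d-1)/r + 1) is also a weight vector of the system. -/
open MvPolynomial

/-- if `(s₁, s₂, d)` is a weight vector of a quasi-homogeneous system `(P, Q)`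
with `P ≢ 0`, `Q ≢ 0`, and `r` is a common divisor of `s₁`, `s₂` and `d - 1`, then
`(s₁/r, s₂/r, (d-1)/r + 1)` is also a weight vector of the system. -/
theorem weight_vector_div_common_divisor
    (P Q : MvPolynomial (Fin 2) ℝ) (s₁ s₂ d r : ℕ)
    (hP0 : P ≠ 0) (hQ0 : Q ≠ 0)
    (hw : IsWeightVector P Q s₁ s₂ d)
    (hr : 0 < r) (hrs₁ : r ∣ s₁) (hrs₂ : r ∣ s₂) (hrd : r ∣ (d - 1)) :
    IsWeightVector P Q (s₁ / r) (s₂ / r) ((d - 1) / r + 1) := by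
  obtain ⟨hs₁, hs₂, hd, h⟩ := hw
  obtain ⟨a, ha⟩ := hrs₁
  obtain ⟨b, hb⟩ := hrs₂
  obtain ⟨c, hc⟩ := hrd
  have hd1 : d = r * c + 1 := by omega
  have ha' : s₁ / r = a := by rw [ha, Nat.mul_div_cancel_left _ hr]
  have hb' : s₂ / r = b := by rw [hb, Nat.mul_div_cancel_left _ hr]
  have hc' : (d - 1) / r = c := by rw [hc, Nat.mul_div_cancel_left _ hr]
  have hapos : 0 < a := by rcases Nat.eq_zero_or_pos a with h0 | h0; · subst h0; simp at ha; omega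
                           · exact h0
  have hbpos : 0 < b := by rcases Nat.eq_zero_or_pos b with h0 | h0; · subst h0; simp at hb; omega
                           · exact h0
  refine ⟨by omega, by omega, by omega, ?_⟩
  intro α hα x y
  set β : ℝ := α ^ ((r : ℝ)⁻¹) with hβ
  have hβpos : 0 < β := Real.rpow_pos_of_pos hα _
  have hβr : β ^ r = α := by
    rw [hβ, ← Real.rpow_natCast (α ^ ((r : ℝ)⁻¹)) r, ← Real.rpow_mul hα.le,
      inv_mul_cancel₀ (by exact_mod_cast hr.ne'), Real.rpow_one]
  have key : ∀ n : ℕ, β ^ (r * n) = α ^ n := by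
    intro n; rw [pow_mul, hβr]
  have h1 := h β hβpos x y
  rw [ha, hb, key, key] at h1
  rw [ha', hb', hc']
  have e1 : r * a + d - 1 = r * (a + c) := by rw [hd1, Nat.mul_add]; omega
  have e2 : r * b + d - 1 = r * (b + c) := by rw [hd1, Nat.mul_add]; omega
  rw [e1, e2, key, key] at h1
  have g1 : a + (c + 1) - 1 = a + c := by omega
  have g2 : b + (c + 1) - 1 = b + c := by omega
  rw [g1, g2]
  exact h1
end

section
/- Let the planar vector field X = (P, Q) be quasi-homogeneous with weight vector (s₁, s₂, d) where s₁ is even and s₂ is odd. Then the system is invariant under (x,y) ↦ (x,-y) up to a time rescaling by a sign: there exists ε ∈ {1,-1} such that P(x,-y) = ε P(x,y) and Q(x,-y) = -ε Q(x,y) for all (x,y). -/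
open MvPolynomial

lemma eval_scale_all (P : MvPolynomial (Fin 2) ℝ) (s₁ s₂ m : ℕ) (x y c : ℝ)
    (h : ∀ α : ℝ, 0 < α → eval ![α ^ s₁ * x, α ^ s₂ * y] P = α ^ m * c) (α : ℝ) :
    eval ![α ^ s₁ * x, α ^ s₂ * y] P = α ^ m * c := by
  set g : Fin 2 → Polynomial ℝ :=
    ![Polynomial.X ^ s₁ * Polynomial.C x, Polynomial.X ^ s₂ * Polynomial.C y] with hg
  set p : Polynomial ℝ :=
    MvPolynomial.eval₂ Polynomial.C g P - Polynomial.X ^ m * Polynomial.C c with hp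
  have heval : ∀ β : ℝ, Polynomial.eval β p
      = eval ![β ^ s₁ * x, β ^ s₂ * y] P - β ^ m * c := by
    intro β
    have h1 : (Polynomial.evalRingHom β) (MvPolynomial.eval₂ Polynomial.C g P)
        = MvPolynomial.eval₂ ((Polynomial.evalRingHom β).comp Polynomial.C)
          ((Polynomial.evalRingHom β) ∘ g) P :=
      MvPolynomial.eval₂_comp_left _ _ _ _
    have hfg : (Polynomial.evalRingHom β).comp Polynomial.C = RingHom.id ℝ := by
      ext r; simp
    have hgg : (Polynomial.evalRingHom β) ∘ g = ![β ^ s₁ * x, β ^ s₂ * y] := by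
      funext i; fin_cases i <;> simp [hg] <;> ring
    rw [hfg, hgg] at h1
    have h2 : MvPolynomial.eval₂ (RingHom.id ℝ) ![β ^ s₁ * x, β ^ s₂ * y] P
        = eval ![β ^ s₁ * x, β ^ s₂ * y] P := rfl
    rw [hp]
    simp only [Polynomial.eval_sub, Polynomial.eval_mul, Polynomial.eval_pow,
      Polynomial.eval_X, Polynomial.eval_C]
    rw [← h2, ← h1]
    rfl
  have hzero : p = 0 := by
    apply Polynomial.eq_zero_of_infinite_isRoot
    apply Set.Infinite.mono (s := Set.Ioi (0:ℝ))
    · intro β hβ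
      simp only [Set.mem_setOf_eq, Polynomial.IsRoot, heval β,
        h β hβ, sub_self]
    · exact Set.Ioi_infinite 0
  have := heval α
  rw [hzero] at this
  simp at this
  linarith [this]

/-- if `(P, Q)` is quasi-homogeneous with weight vector `(s₁, s₂, d)` with `s₁`
even and `s₂` odd, then the system is invariant under `(x,y) ↦ (x,-y)` up to a sign of time:
there is `ε ∈ {1,-1}` with `P(x,-y) = ε P(x,y)` and `Q(x,-y) = -ε Q(x,y)`. -/
theorem quasi_homogeneous_symmetry_x_axis
    (P Q : MvPolynomial (Fin 2) ℝ) (s₁ s₂ d : ℕ)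
    (hs₁ : 0 < s₁) (hs₂ : 0 < s₂) (hd : 0 < d)
    (hEven : Even s₁) (hOdd : Odd s₂)
    (hP : ∀ α : ℝ, 0 < α → ∀ x y : ℝ,
      eval ![α ^ s₁ * x, α ^ s₂ * y] P = α ^ (s₁ + d - 1) * eval ![x, y] P)
    (hQ : ∀ α : ℝ, 0 < α → ∀ x y : ℝ,
      eval ![α ^ s₁ * x, α ^ s₂ * y] Q = α ^ (s₂ + d - 1) * eval ![x, y] Q) :
    ∃ ε : ℝ, (ε = 1 ∨ ε = -1) ∧ ∀ x y : ℝ,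
      eval ![x, -y] P = ε * eval ![x, y] P ∧
      eval ![x, -y] Q = -ε * eval ![x, y] Q := by
  refine ⟨(-1 : ℝ) ^ (d - 1), ?_, ?_⟩
  · rcases Nat.even_or_odd (d - 1) with h | h
    · exact Or.inl (h.neg_one_pow)
    · exact Or.inr (h.neg_one_pow)
  · intro x y
    have hs₁' : ((-1 : ℝ)) ^ s₁ = 1 := hEven.neg_one_pow
    have hs₂' : ((-1 : ℝ)) ^ s₂ = -1 := hOdd.neg_one_pow
    have hPn := eval_scale_all P s₁ s₂ (s₁ + d - 1) x y (eval ![x, y] P)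
      (fun α hα => hP α hα x y) (-1)
    have hQn := eval_scale_all Q s₁ s₂ (s₂ + d - 1) x y (eval ![x, y] Q)
      (fun α hα => hQ α hα x y) (-1)
    rw [hs₁', hs₂', one_mul, neg_one_mul] at hPn hQn
    have e1 : s₁ + d - 1 = s₁ + (d - 1) := by omega
    have e2 : s₂ + d - 1 = s₂ + (d - 1) := by omega
    rw [e1, pow_add, hs₁', one_mul] at hPn
    rw [e2, pow_add, hs₂', neg_one_mul] at hQn
    exact ⟨hPn, hQn.trans (by ring)⟩
end
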